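/- Let k > 0 and a > 0 be real numbers, and let R_k be the Litim regulator. Then ∫_{ℝ} dω / (ω² + a + R_k(ω))² = 2k/(k² + a)² + (π/2 − arctan(k/√a))/a^{3/2} − k/(a·(k² + a)). -/

import Mathlib

open MeasureTheory Real

/-- The Litim regulator at scale `k`: `R_k(ω) = (k² − ω²)·θ(k² − ω²)`. -/
noncomputable def litim (k ω : ℝ) : ℝ := if ω ^ 2 < k ^ 2 then k ^ 2 - ω ^ 2 else 0

/-! The regulated propagator is constant, `(k² + a)⁻²`, on `[-k, k]` and equals the bare
propagator `(ω² + a)⁻²` outside. By evenness the integral is twice the one over `(0, ∞)`; the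
piece over `(0, k]` gives `k / (k² + a)²`, and the tail is evaluated with the elementary primitive
`ω / (2a(ω² + a)) + arctan(ω / √a) / (2a√a)` of `(ω² + a)⁻²`, which tends to `π / (4a√a)`. -/

open Filter Set Topology

section InvSqAddSq

variable {a : ℝ}

noncomputable def invSqAddSqPrimitive (a ω : ℝ) : ℝ :=
  ω / (2 * a * (ω ^ 2 + a)) + arctan (ω / √a) / (2 * a * √a)

theorem hasDerivAt_invSqAddSqPrimitive (ha : 0 < a) (ω : ℝ) :
    HasDerivAt (invSqAddSqPrimitive a) (1 / (ω ^ 2 + a) ^ 2) ω := by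
  have hs2 : √a ^ 2 = a := sq_sqrt ha.le
  have hrat : HasDerivAt (fun ω : ℝ => ω / (2 * a * (ω ^ 2 + a)))
      ((1 * (2 * a * (ω ^ 2 + a)) - ω * (2 * a * (2 * ω))) / (2 * a * (ω ^ 2 + a)) ^ 2) ω := by
    refine (hasDerivAt_id ω).div ?_ (by positivity)
    simpa using ((hasDerivAt_pow 2 ω).add_const a).const_mul (2 * a)
  have harctan : HasDerivAt (fun ω : ℝ => arctan (ω / √a) / (2 * a * √a))
      (1 / (1 + (ω / √a) ^ 2) * (1 / √a) / (2 * a * √a)) ω := by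
    simpa using (((hasDerivAt_id ω).div_const √a).arctan).div_const (2 * a * √a)
  refine (hrat.add harctan).congr_deriv ?_
  rw [div_pow, hs2]
  field_simp
  rw [hs2]
  ring

theorem tendsto_invSqAddSqPrimitive_atTop (ha : 0 < a) :
    Tendsto (invSqAddSqPrimitive a) atTop (𝓝 (π / (4 * a * √a))) := by
  have hs : 0 < √a := sqrt_pos.2 ha
  have hrat : Tendsto (fun ω : ℝ => ω / (2 * a * (ω ^ 2 + a))) atTop (𝓝 0) := by
    have hdecay : Tendsto (fun ω : ℝ => (2 * a)⁻¹ * ω⁻¹) atTop (𝓝 0) := by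
      simpa using tendsto_inv_atTop_zero.const_mul (2 * a)⁻¹
    refine tendsto_of_tendsto_of_tendsto_of_le_of_le' tendsto_const_nhds hdecay ?_ ?_
    · filter_upwards [eventually_ge_atTop 0] with ω hω
      positivity
    · filter_upwards [eventually_gt_atTop 0] with ω hω
      rw [← mul_inv, div_le_iff₀ (by positivity)]
      field_simp
      nlinarith
  have harctan : Tendsto (fun ω : ℝ => arctan (ω / √a)) atTop (𝓝 (π / 2)) :=
    tendsto_nhds_of_tendsto_nhdsWithin tendsto_arctan_atTop |>.comp
      (tendsto_id.atTop_div_const hs)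
  rw [show π / (4 * a * √a) = 0 + π / 2 / (2 * a * √a) by field_simp; ring]
  exact hrat.add (harctan.div_const (2 * a * √a))

theorem integrableOn_Ioi_one_div_sq_add_sq (ha : 0 < a) (k : ℝ) :
    IntegrableOn (fun ω : ℝ => 1 / (ω ^ 2 + a) ^ 2) (Ioi k) :=
  integrableOn_Ioi_deriv_of_nonneg' (fun ω _ => hasDerivAt_invSqAddSqPrimitive ha ω)
    (fun ω _ => by positivity) (tendsto_invSqAddSqPrimitive_atTop ha)

theorem integral_Ioi_one_div_sq_add_sq (ha : 0 < a) (k : ℝ) :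
    ∫ ω in Ioi k, 1 / (ω ^ 2 + a) ^ 2 =
      (π / 2 - arctan (k / √a)) / (2 * a * √a) - k / (2 * a * (k ^ 2 + a)) := by
  rw [integral_Ioi_of_hasDerivAt_of_nonneg' (fun ω _ => hasDerivAt_invSqAddSqPrimitive ha ω)
    (fun ω _ => by positivity) (tendsto_invSqAddSqPrimitive_atTop ha), invSqAddSqPrimitive]
  ring

end InvSqAddSq

section Litim

variable {k ω : ℝ}

theorem litim_abs : litim k |ω| = litim k ω := by
  simp only [litim, sq_abs]

theorem sq_add_litim_of_sq_le_sq (h : ω ^ 2 ≤ k ^ 2) : ω ^ 2 + litim k ω = k ^ 2 := by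
  unfold litim
  split_ifs with hlt
  · ring
  · rw [add_zero, le_antisymm h (not_lt.1 hlt)]

theorem litim_eq_zero_of_sq_le_sq (h : k ^ 2 ≤ ω ^ 2) : litim k ω = 0 :=
  if_neg h.not_gt

theorem eqOn_litim_propagator_sq_uIcc (k a : ℝ) :
    EqOn (fun ω => 1 / (ω ^ 2 + a + litim k ω) ^ 2) (fun _ => 1 / (k ^ 2 + a) ^ 2) (uIcc 0 k) := by
  intro ω hω
  have hsq : ω ^ 2 ≤ k ^ 2 := by
    rcases mem_uIcc.1 hω with ⟨h₀, hk⟩ | ⟨hk, h₀⟩ <;> nlinarith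
  simp only [add_right_comm _ a, sq_add_litim_of_sq_le_sq hsq]

theorem intervalIntegrable_litim_propagator_sq (k a : ℝ) :
    IntervalIntegrable (fun ω => 1 / (ω ^ 2 + a + litim k ω) ^ 2) volume 0 k :=
  (intervalIntegrable_congr ((eqOn_litim_propagator_sq_uIcc k a).mono uIoc_subset_uIcc)).2
    intervalIntegrable_const

theorem intervalIntegral_litim_propagator_sq (k a : ℝ) :
    ∫ ω in 0..k, 1 / (ω ^ 2 + a + litim k ω) ^ 2 = k / (k ^ 2 + a) ^ 2 := by
  rw [intervalIntegral.integral_congr (eqOn_litim_propagator_sq_uIcc k a),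
    intervalIntegral.integral_const, smul_eq_mul]
  ring

theorem eqOn_litim_propagator_sq_Ioi (hk : 0 ≤ k) (a : ℝ) :
    EqOn (fun ω => 1 / (ω ^ 2 + a + litim k ω) ^ 2) (fun ω => 1 / (ω ^ 2 + a) ^ 2) (Ioi k) := by
  intro ω hω
  have hsq : k ^ 2 ≤ ω ^ 2 := pow_le_pow_left₀ hk (le_of_lt hω) 2
  simp only [litim_eq_zero_of_sq_le_sq hsq, add_zero]

end Litim

theorem integral_litim_propagator_sq (k a : ℝ) (hk : 0 < k) (ha : 0 < a) :
    ∫ ω : ℝ, 1 / (ω ^ 2 + a + litim k ω) ^ 2 =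
      2 * k / (k ^ 2 + a) ^ 2 + (π / 2 - arctan (k / Real.sqrt a)) / Real.sqrt a ^ 3
        - k / (a * (k ^ 2 + a)) := by
  have htail := eqOn_litim_propagator_sq_Ioi hk.le a
  calc ∫ ω, 1 / (ω ^ 2 + a + litim k ω) ^ 2
      = ∫ ω, 1 / (|ω| ^ 2 + a + litim k |ω|) ^ 2 := by simp only [sq_abs, litim_abs]
    _ = 2 * ∫ ω in Ioi 0, 1 / (ω ^ 2 + a + litim k ω) ^ 2 :=
      integral_comp_abs (f := fun ω => 1 / (ω ^ 2 + a + litim k ω) ^ 2)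
    _ = 2 * ((∫ ω in 0..k, 1 / (ω ^ 2 + a + litim k ω) ^ 2)
          + ∫ ω in Ioi k, 1 / (ω ^ 2 + a + litim k ω) ^ 2) := by
      rw [intervalIntegral.integral_interval_add_Ioi' (intervalIntegrable_litim_propagator_sq k a)
        ((integrableOn_congr_fun htail measurableSet_Ioi).2
          (integrableOn_Ioi_one_div_sq_add_sq ha k))]
    _ = 2 * (k / (k ^ 2 + a) ^ 2 + ((π / 2 - arctan (k / √a)) / (2 * a * √a)
          - k / (2 * a * (k ^ 2 + a)))) := by
      rw [intervalIntegral_litim_propagator_sq, setIntegral_congr_fun measurableSet_Ioi htail,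
        integral_Ioi_one_div_sq_add_sq ha]
    _ = _ := by
      rw [show √a ^ 3 = a * √a by rw [pow_succ, sq_sqrt ha.le]]
      field_simp
      ring
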